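/- For every real t ≠ 0, the 4×4 real matrices M_t with rows (1,0,1,t−1), (0,1,1,t), (0,0,1,t+1/2), (0,0,0,1) and N_t with rows (1,0,0,0), (2+1/t,1,0,0), (2,1,1,0), (1,1,0,1) satisfy the figure-eight knot group relation M_t·w_t = w_t·N_t, where w_t = N_t·M_t⁻¹·N_t⁻¹·M_t. -/
import Mathlib


/-- The meridian matrix `M_t = ρ_t(m)`. -/
noncomputable def Mmat (t : ℝ) : Matrix (Fin 4) (Fin 4) ℝ :=
  !![1, 0, 1, t - 1;
     0, 1, 1, t;
     0, 0, 1, t + 1 / 2;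
     0, 0, 0, 1]

/-- The meridian matrix `N_t = ρ_t(n)`. -/
noncomputable def Nmat (t : ℝ) : Matrix (Fin 4) (Fin 4) ℝ :=
  !![1, 0, 0, 0;
     2 + 1 / t, 1, 0, 0;
     2, 1, 1, 0;
     1, 1, 0, 1]

/-- Explicit inverse of `Mmat t`. -/
noncomputable def MmatInv (t : ℝ) : Matrix (Fin 4) (Fin 4) ℝ :=
  !![1, 0, -1, 3 / 2;
     0, 1, -1, 1 / 2;
     0, 0, 1, -(t + 1 / 2);
     0, 0, 0, 1]

/-- Explicit inverse of `Nmat t`. -/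
noncomputable def NmatInv (t : ℝ) : Matrix (Fin 4) (Fin 4) ℝ :=
  !![1, 0, 0, 0;
     -(2 + 1 / t), 1, 0, 0;
     1 / t, -1, 1, 0;
     1 + 1 / t, -1, 0, 1]

lemma Minv_eq (t : ℝ) : (Mmat t)⁻¹ = MmatInv t := by
  apply Matrix.inv_eq_right_inv
  ext i j
  fin_cases i <;> fin_cases j <;>
    simp [Mmat, MmatInv, Matrix.mul_apply, Fin.sum_univ_four, Matrix.vecHead, Matrix.vecTail,
      Matrix.one_apply] <;> ring

lemma Ninv_eq (t : ℝ) (ht : t ≠ 0) : (Nmat t)⁻¹ = NmatInv t := by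
  apply Matrix.inv_eq_right_inv
  ext i j
  fin_cases i <;> fin_cases j <;>
    simp [Nmat, NmatInv, Matrix.mul_apply, Fin.sum_univ_four, Matrix.vecHead, Matrix.vecTail,
      Matrix.one_apply] <;> (try field_simp) <;> ring

/-- `N * M⁻¹`. -/
noncomputable def Amat (t : ℝ) : Matrix (Fin 4) (Fin 4) ℝ :=
  !![1, 0, -1, 3/2;
     2 + 1/t, 1, -3 - 1/t, 7/2 + (3/2)/t;
     2, 1, -2, -t + 3;
     1, 1, -2, 3]

/-- `N * M⁻¹ * N⁻¹`. -/
noncomputable def Bmat (t : ℝ) : Matrix (Fin 4) (Fin 4) ℝ :=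
  !![5/2 + (1/2)/t, -1/2, -1, 3/2;
     7/2 + 2/t + (1/2)/t^2, 1/2 - (1/2)/t, -3 - 1/t, 7/2 + (3/2)/t;
     -t + 2, t, -2, -t + 3;
     2, 0, -2, 3]

/-- `w = N * M⁻¹ * N⁻¹ * M`. -/
noncomputable def Wmat (t : ℝ) : Matrix (Fin 4) (Fin 4) ℝ :=
  !![5/2 + (1/2)/t, -1/2, 1 + (1/2)/t, t - 1 - (1/2)/t;
     7/2 + 2/t + (1/2)/t^2, 1/2 - (1/2)/t, 1 + (1/2)/t + (1/2)/t^2, t - 1 - (1/2)/t - (1/2)/t^2;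
     -t + 2, t, 0, 0;
     2, 0, 0, 0]

/-- `M * w = w * N`. -/
noncomputable def Lmat (t : ℝ) : Matrix (Fin 4) (Fin 4) ℝ :=
  !![t + 5/2 + (1/2)/t, t - 1/2, 1 + (1/2)/t, t - 1 - (1/2)/t;
     t + 11/2 + 2/t + (1/2)/t^2, t + 1/2 - (1/2)/t, 1 + (1/2)/t + (1/2)/t^2, t - 1 - (1/2)/t - (1/2)/t^2;
     t + 3, t, 0, 0;
     2, 0, 0, 0]

lemma stepA (t : ℝ) : Nmat t * MmatInv t = Amat t := by
  ext i j
  fin_cases i <;> fin_cases j <;>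
    simp [Nmat, MmatInv, Amat, Matrix.mul_apply, Fin.sum_univ_four, Matrix.vecHead,
      Matrix.vecTail] <;> ring

lemma stepB (t : ℝ) (ht : t ≠ 0) : Amat t * NmatInv t = Bmat t := by
  ext i j
  fin_cases i <;> fin_cases j <;>
    simp [NmatInv, Amat, Bmat, Matrix.mul_apply, Fin.sum_univ_four, Matrix.vecHead,
      Matrix.vecTail] <;> (try field_simp) <;> ring

lemma stepW (t : ℝ) (ht : t ≠ 0) : Bmat t * Mmat t = Wmat t := by
  ext i j
  fin_cases i <;> fin_cases j <;>
    simp [Mmat, Bmat, Wmat, Matrix.mul_apply, Fin.sum_univ_four, Matrix.vecHead,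
      Matrix.vecTail] <;> (try field_simp) <;> ring

lemma stepL (t : ℝ) (ht : t ≠ 0) : Mmat t * Wmat t = Lmat t := by
  ext i j
  fin_cases i <;> fin_cases j <;>
    simp [Mmat, Wmat, Lmat, Matrix.mul_apply, Fin.sum_univ_four, Matrix.vecHead,
      Matrix.vecTail] <;> (try field_simp) <;> ring

lemma stepR (t : ℝ) (ht : t ≠ 0) : Wmat t * Nmat t = Lmat t := by
  ext i j
  fin_cases i <;> fin_cases j <;>
    simp [Nmat, Wmat, Lmat, Matrix.mul_apply, Fin.sum_univ_four, Matrix.vecHead,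
      Matrix.vecTail] <;> (try field_simp) <;> ring

/-- For `t ≠ 0` the matrices `M_t, N_t` satisfy the figure-eight knot group relation
`M·w = w·N` where `w = N·M⁻¹·N⁻¹·M`. -/
theorem stmt_16 (t : ℝ) (ht : t ≠ 0) :
    Mmat t * (Nmat t * (Mmat t)⁻¹ * (Nmat t)⁻¹ * Mmat t) =
      (Nmat t * (Mmat t)⁻¹ * (Nmat t)⁻¹ * Mmat t) * Nmat t := by
  rw [Minv_eq t, Ninv_eq t ht, stepA t, stepB t ht, stepW t ht, stepL t ht, stepR t ht]
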